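/- arXiv:0806.4422 — 5 statements merged into one kernel-verified Lean document; each statement's English description precedes it below -/
import Mathlib

section
/- The function g(q) = π² (q - q²) / sin²(πq) is convex on the open interval (0,1). -/
/-!
Write `g q = φ (π q) · φ (π - π q)` with `φ x = x / sin x`, using `sin (π - π q) = sin (π q)`.
So `log g q = ψ (π q) + ψ (π - π q)` with `ψ x = log x - log (sin x)`, and `ψ` is convex on
`(0, π)`: `ψ'' x = 1 / sin² x - 1 / x² ≥ 0` because `sin² x ≤ x²`. Hence `log g` is convex, and
so is `g = exp ∘ log g`.
-/

open Real Set

section Composition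

variable {𝕜 E α β : Type*} [Semiring 𝕜] [PartialOrder 𝕜] [AddCommMonoid E] [SMul 𝕜 E]
  [AddCommMonoid α] [PartialOrder α] [SMul 𝕜 α] [AddCommMonoid β] [PartialOrder β] [SMul 𝕜 β]

theorem ConvexOn.comp_of_monotone {s : Set E} {f : E → β} {g : β → α} (hg : ConvexOn 𝕜 univ g)
    (hg' : Monotone g) (hf : ConvexOn 𝕜 s f) : ConvexOn 𝕜 s (g ∘ f) :=
  ⟨hf.1, fun _ hx _ hy _ _ ha hb hab =>
    (hg' (hf.2 hx hy ha hb hab)).trans (hg.2 (mem_univ _) (mem_univ _) ha hb hab)⟩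

end Composition

theorem ConvexOn.comp_mul_add {s : Set ℝ} {f : ℝ → ℝ} (hf : ConvexOn ℝ s f) (a b : ℝ) :
    ConvexOn ℝ ((fun x => a * x + b) ⁻¹' s) (fun x => f (a * x + b)) :=
  hf.comp_affineMap ((LinearMap.mulLeft ℝ a).toAffineMap + AffineMap.const ℝ ℝ b)

theorem hasDerivAt_log_sub_log_sin {x : ℝ} (hx : x ≠ 0) (hsin : sin x ≠ 0) :
    HasDerivAt (fun y => log y - log (sin y)) (x⁻¹ - cos x / sin x) x :=
  (hasDerivAt_log hx).sub ((hasDerivAt_sin x).log hsin)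

theorem hasDerivAt_inv_sub_cos_div_sin {x : ℝ} (hx : x ≠ 0) (hsin : sin x ≠ 0) :
    HasDerivAt (fun y => y⁻¹ - cos y / sin y) ((sin x ^ 2)⁻¹ - (x ^ 2)⁻¹) x := by
  refine ((hasDerivAt_inv hx).sub ((hasDerivAt_cos x).div (hasDerivAt_sin x) hsin)).congr_deriv ?_
  field_simp
  linear_combination x ^ 2 * sin_sq_add_cos_sq x

theorem convexOn_log_sub_log_sin : ConvexOn ℝ (Ioo 0 π) (fun x => log x - log (sin x)) := by
  have hne : ∀ x ∈ Ioo 0 π, x ≠ 0 ∧ sin x ≠ 0 := fun x hx =>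
    ⟨hx.1.ne', (sin_pos_of_pos_of_lt_pi hx.1 hx.2).ne'⟩
  refine convexOn_of_hasDerivWithinAt2_nonneg (convex_Ioo 0 π)
    (f' := fun x => x⁻¹ - cos x / sin x) (f'' := fun x => (sin x ^ 2)⁻¹ - (x ^ 2)⁻¹)
    (fun x hx => (hasDerivAt_log_sub_log_sin (hne x hx).1 (hne x hx).2).continuousAt.continuousWithinAt)
    ?_ ?_ ?_ <;> simp only [interior_Ioo] <;> intro x hx
  · exact (hasDerivAt_log_sub_log_sin (hne x hx).1 (hne x hx).2).hasDerivWithinAt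
  · exact (hasDerivAt_inv_sub_cos_div_sin (hne x hx).1 (hne x hx).2).hasDerivWithinAt
  · exact sub_nonneg.2 (inv_anti₀ (pow_pos (sin_pos_of_pos_of_lt_pi hx.1 hx.2) 2) sin_sq_le_sq)

theorem exp_log_sub_log_sin {x : ℝ} (hx : x ∈ Ioo 0 π) :
    exp (log x - log (sin x)) = x / sin x := by
  rw [exp_sub, exp_log hx.1, exp_log (sin_pos_of_pos_of_lt_pi hx.1 hx.2)]

/-- The function `g q = π² (q - q²) / sin²(π q)` is convex on `(0,1)`. -/
theorem convexOn_cauchy_variance_factor :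
    ConvexOn ℝ (Set.Ioo (0 : ℝ) 1)
      (fun q => π ^ 2 * (q - q ^ 2) / (Real.sin (π * q)) ^ 2) := by
  have hmaps : ∀ q ∈ Ioo (0 : ℝ) 1, π * q ∈ Ioo 0 π ∧ π - π * q ∈ Ioo 0 π := fun q hq =>
    ⟨⟨by nlinarith [pi_pos, hq.1], by nlinarith [pi_pos, hq.2]⟩,
      ⟨by nlinarith [pi_pos, hq.2], by nlinarith [pi_pos, hq.1]⟩⟩
  have hleft := (convexOn_log_sub_log_sin.comp_mul_add π 0).subset
    (fun q hq => by simpa using (hmaps q hq).1) (convex_Ioo 0 1)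
  have hright := (convexOn_log_sub_log_sin.comp_mul_add (-π) π).subset
    (fun q hq => by simpa [neg_mul, neg_add_eq_sub] using (hmaps q hq).2) (convex_Ioo 0 1)
  refine (convexOn_exp.comp_of_monotone exp_monotone (hleft.add hright)).congr fun q hq => ?_
  obtain ⟨hl, hr⟩ := hmaps q hq
  have hsin : sin (π * q) ≠ 0 := (sin_pos_of_pos_of_lt_pi hl.1 hl.2).ne'
  simp only [Function.comp, Pi.add_apply, exp_add, add_zero, neg_mul, neg_add_eq_sub]
  rw [exp_log_sub_log_sin hl, exp_log_sub_log_sin hr, sin_pi_sub]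
  field_simp
end

section
/- The function L(q) = log(q - q²) - 2 log(sin(πq)) on (0,1) satisfies L'(1/2) = 0, and L is convex; hence q = 1/2 is the unique global minimizer of g(q) = π²(q-q²)/sin²(πq) on (0,1). -/
/-!
Since `(1 - q) - (1 - q)² = q - q²` and `sin (π (1 - q)) = sin (π q)`, `L` is symmetric about
`1/2`, which forces `L' (1/2) = 0`. Writing `q - q² = q (1 - q)` gives `L q = h q + h (1 - q)` with
`h x = log x - log (sin (π x))`, and `h'' x = π² / sin² (π x) - 1 / x² > 0` because
`sin (π x) < π x`. So `L` is strictly convex on `(0,1)`, and a strictly convex function symmetric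
about `1/2` has its unique minimum there. Finally `g = π² exp ∘ L` on `(0,1)`.
-/

open Real Set

theorem StrictConvexOn.comp_const_sub {𝕜 E β : Type*} [Ring 𝕜] [PartialOrder 𝕜] [AddCommGroup E]
    [Module 𝕜 E] [AddCommMonoid β] [PartialOrder β] [SMul 𝕜 β] {s : Set E} {f : E → β}
    (hf : StrictConvexOn 𝕜 s f) (c : E) :
    StrictConvexOn 𝕜 ((c - ·) ⁻¹' s) (fun x => f (c - x)) := by
  have hreflect : ∀ {x y : E} {a b : 𝕜}, a + b = 1 →
      c - (a • x + b • y) = a • (c - x) + b • (c - y) := fun hab => by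
    rw [smul_sub, smul_sub, sub_add_sub_comm, Convex.combo_self hab]
  refine ⟨fun x hx y hy a b ha hb hab => ?_, fun x hx y hy hxy a b ha hb hab => ?_⟩
  · simpa only [mem_preimage, hreflect hab] using hf.1 hx hy ha hb hab
  · simpa only [hreflect hab] using hf.2 hx hy (sub_right_injective.ne hxy) ha hb hab

theorem deriv_eq_zero_of_comp_const_sub_eq {F : Type*}
    [NormedAddCommGroup F] [NormedSpace ℝ F] {f : ℝ → F} {c : ℝ}
    (hf : ∀ x, f (c - x) = f x) : deriv f (c / 2) = 0 := by
  have h := deriv_comp_const_sub f c (c / 2)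
  simp only [hf, sub_half] at h
  rw [eq_neg_iff_add_eq_zero, ← two_smul ℝ, smul_eq_zero] at h
  exact h.resolve_left two_ne_zero

lemma strictConvexOn_of_hasDerivWithinAt2_pos {D : Set ℝ} (hD : Convex ℝ D) {f f' f'' : ℝ → ℝ}
    (hf : ContinuousOn f D) (hf' : ∀ x ∈ interior D, HasDerivWithinAt f (f' x) (interior D) x)
    (hf'' : ∀ x ∈ interior D, HasDerivWithinAt f' (f'' x) (interior D) x)
    (hf''₀ : ∀ x ∈ interior D, 0 < f'' x) : StrictConvexOn ℝ D f := by
  have hderiv : (interior D).EqOn (deriv f) f' := deriv_eqOn isOpen_interior hf'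
  refine strictConvexOn_of_deriv2_pos hD hf fun x hx ↦ ?_
  convert hf''₀ _ hx
  dsimp
  rw [deriv_eqOn isOpen_interior (fun y hy ↦ ?_) hx]
  exact (hf'' _ hy).congr hderiv <| by rw [hderiv hy]

lemma sin_pi_mul_pos {x : ℝ} (hx : x ∈ Ioo (0 : ℝ) 1) : 0 < sin (π * x) :=
  sin_pos_of_pos_of_lt_pi (mul_pos pi_pos hx.1) (mul_lt_of_lt_one_right pi_pos hx.2)

lemma hasDerivAt_sin_pi_mul (x : ℝ) : HasDerivAt (fun y => sin (π * y)) (π * cos (π * x)) x := by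
  simpa [mul_comm] using ((hasDerivAt_id x).const_mul π).sin

namespace CauchyVariance

noncomputable def logDivSinPi (x : ℝ) : ℝ := log x - log (sin (π * x))

lemma hasDerivAt_logDivSinPi {x : ℝ} (hx : x ∈ Ioo (0 : ℝ) 1) :
    HasDerivAt logDivSinPi (x⁻¹ - π * cos (π * x) / sin (π * x)) x :=
  (hasDerivAt_log hx.1.ne').sub ((hasDerivAt_sin_pi_mul x).log (sin_pi_mul_pos hx).ne')

lemma hasDerivAt_deriv_logDivSinPi {x : ℝ} (hx : x ∈ Ioo (0 : ℝ) 1) :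
    HasDerivAt (fun y => y⁻¹ - π * cos (π * y) / sin (π * y))
      (π ^ 2 / sin (π * x) ^ 2 - (x ^ 2)⁻¹) x := by
  have hcos : HasDerivAt (fun y => π * cos (π * y)) (π * (-(π * sin (π * x)))) x := by
    simpa [mul_comm] using (((hasDerivAt_id x).const_mul π).cos).const_mul π
  refine ((hasDerivAt_inv hx.1.ne').fun_sub
    (hcos.fun_div (hasDerivAt_sin_pi_mul x) (sin_pi_mul_pos hx).ne')).congr_deriv ?_
  have hpyth := sin_sq_add_cos_sq (π * x)
  have hsin := (sin_pi_mul_pos hx).ne'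
  -- opaque atoms keep `field_simp` from normalizing `π * x` inside `sin`
  generalize sin (π * x) = s, cos (π * x) = c at hpyth hsin ⊢
  field_simp
  linear_combination π ^ 2 * hpyth

lemma strictConvexOn_logDivSinPi : StrictConvexOn ℝ (Ioo 0 1) logDivSinPi := by
  refine strictConvexOn_of_hasDerivWithinAt2_pos (convex_Ioo 0 1)
    (fun x hx => (hasDerivAt_logDivSinPi hx).continuousAt.continuousWithinAt)
    (fun x hx => (hasDerivAt_logDivSinPi (by simpa using hx)).hasDerivWithinAt)
    (fun x hx => (hasDerivAt_deriv_logDivSinPi (by simpa using hx)).hasDerivWithinAt)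
    fun x hx => ?_
  rw [interior_Ioo] at hx
  have hsin : sin (π * x) < π * x := sin_lt (mul_pos pi_pos hx.1)
  have hsin_pos := sin_pi_mul_pos hx
  have hx_pos := hx.1
  rw [sub_pos, inv_eq_one_div, div_lt_div_iff₀ (by positivity) (by positivity), one_mul, ← mul_pow]
  exact pow_lt_pow_left₀ hsin hsin_pos.le two_ne_zero

/-- The function `L` of the paper. -/
noncomputable def logRatio (q : ℝ) : ℝ := log (q - q ^ 2) - 2 * log (sin (π * q))

lemma logRatio_one_sub (q : ℝ) : logRatio (1 - q) = logRatio q := by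
  rw [logRatio, logRatio, mul_one_sub, sin_pi_sub]
  ring_nf

lemma logRatio_eq_add {q : ℝ} (hq : q ∈ Ioo (0 : ℝ) 1) :
    logRatio q = logDivSinPi q + logDivSinPi (1 - q) := by
  rw [logRatio, logDivSinPi, logDivSinPi, mul_one_sub, sin_pi_sub,
    show q - q ^ 2 = q * (1 - q) by ring, log_mul hq.1.ne' (sub_pos.2 hq.2).ne']
  ring

lemma strictConvexOn_logRatio : StrictConvexOn ℝ (Ioo 0 1) logRatio := by
  have hreflect : StrictConvexOn ℝ (Ioo 0 1) fun q => logDivSinPi (1 - q) := by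
    simpa using strictConvexOn_logDivSinPi.comp_const_sub 1
  exact (strictConvexOn_logDivSinPi.add hreflect).congr fun q hq => (logRatio_eq_add hq).symm

lemma deriv_logRatio_half : deriv logRatio (1 / 2) = 0 := by
  simpa using deriv_eq_zero_of_comp_const_sub_eq logRatio_one_sub

lemma logRatio_half_lt {q : ℝ} (hq : q ∈ Ioo (0 : ℝ) 1) (hne : q ≠ 1 / 2) :
    logRatio (1 / 2) < logRatio q := by
  have h1q : 1 - q ∈ Ioo (0 : ℝ) 1 := ⟨sub_pos.2 hq.2, sub_lt_self 1 hq.1⟩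
  calc logRatio (1 / 2) = logRatio ((1 / 2 : ℝ) • q + (1 / 2 : ℝ) • (1 - q)) := by
        congr 1; simp only [smul_eq_mul]; ring
    _ < (1 / 2 : ℝ) • logRatio q + (1 / 2 : ℝ) • logRatio (1 - q) :=
        strictConvexOn_logRatio.2 hq h1q (fun h => hne (by linarith)) one_half_pos one_half_pos
          (add_halves 1)
    _ = logRatio q := by rw [logRatio_one_sub, Convex.combo_self (add_halves 1)]

lemma exp_logRatio {q : ℝ} (hq : q ∈ Ioo (0 : ℝ) 1) :
    exp (logRatio q) = (q - q ^ 2) / sin (π * q) ^ 2 := by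
  have hpos : 0 < q - q ^ 2 := by nlinarith [hq.1, hq.2]
  have hsin := sin_pi_mul_pos hq
  have hlog_sq : 2 * log (sin (π * q)) = log (sin (π * q) ^ 2) := by norm_num [log_pow]
  rw [logRatio, hlog_sq, exp_sub, exp_log hpos, exp_log (by positivity)]

end CauchyVariance

/-- `L q = log (q - q²) - 2 log (sin (π q))` satisfies `L'(1/2) = 0` and is convex on
`(0,1)`; hence `q = 1/2` is the unique global minimizer of
`g q = π² (q - q²) / sin² (π q)` on `(0,1)`. -/
theorem cauchy_variance_minimizer :
    let L : ℝ → ℝ := fun q => Real.log (q - q ^ 2) - 2 * Real.log (Real.sin (π * q))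
    let g : ℝ → ℝ := fun q => π ^ 2 * (q - q ^ 2) / (Real.sin (π * q)) ^ 2
    deriv L (1 / 2) = 0 ∧ ConvexOn ℝ (Set.Ioo (0 : ℝ) 1) L ∧
      ∀ q ∈ Set.Ioo (0 : ℝ) 1, q ≠ 1 / 2 → g (1 / 2) < g q := by
  intro L g
  refine ⟨CauchyVariance.deriv_logRatio_half,
    CauchyVariance.strictConvexOn_logRatio.convexOn, fun q hq hne => ?_⟩
  have hg : ∀ x ∈ Ioo (0 : ℝ) 1, g x = π ^ 2 * exp (CauchyVariance.logRatio x) := fun x hx => by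
    simp only [g, CauchyVariance.exp_logRatio hx, mul_div_assoc]
  rw [hg _ ⟨by norm_num, by norm_num⟩, hg q hq]
  gcongr
  exact CauchyVariance.logRatio_half_lt hq hne
end

section
/- The function h(q) = (1-q)/(q · log²(q)) is convex on (0,1), and its unique minimizer q* ∈ (0,1) satisfies -log(q*) + 2q* - 2 = 0. -/
/-!
Writing `L = log q`, one computes `h'' q = 2 (L² + 3L + 3 - q (L + 3)) / (q³ L⁴)`, and the
numerator is positive on `(0,1)` because `q = e^L` and `e^L (1 - L) < 1` for `L < 0`; so `h` is
strictly convex. Its derivative `h' q = (2q - 2 - log q) / (q² L³)` vanishes at a root of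
`-log q + 2q - 2`, which exists in `(e⁻², 1/2)` by the intermediate value theorem, and a critical
point of a strictly convex function is its unique minimizer.
-/

open Real Set Topology

lemma StrictConvexOn.lt_of_hasDerivAt_eq_zero {S : Set ℝ} {f : ℝ → ℝ} {x y : ℝ}
    (hf : StrictConvexOn ℝ S f) (hx : x ∈ S) (hy : y ∈ S) (hyx : y ≠ x)
    (hd : HasDerivAt f 0 x) : f x < f y := by
  rcases hyx.lt_or_gt with hlt | hgt
  · have := hf.slope_lt_of_hasDerivAt hy hx hlt hd
    rw [slope_def_field, div_neg_iff] at this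
    rcases this with ⟨-, h⟩ | ⟨h, -⟩ <;> linarith
  · have := hf.lt_slope_of_hasDerivAt hx hy hgt hd
    rw [slope_def_field, div_pos_iff] at this
    rcases this with ⟨h, -⟩ | ⟨-, h⟩ <;> linarith

lemma exp_mul_add_three_lt {L : ℝ} (hL : L < 0) : exp L * (L + 3) < L ^ 2 + 3 * L + 3 := by
  have key : exp L * (1 - L) < 1 := by
    have := add_one_lt_exp (neg_ne_zero.2 hL.ne)
    calc exp L * (1 - L) < exp L * exp (-L) := by gcongr; linarith
      _ = 1 := by rw [← exp_add, add_neg_cancel, exp_zero]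
  rcases le_or_gt (L + 3) 0 with h3 | h3
  · nlinarith [exp_pos L, sq_nonneg (2 * L + 3)]
  · -- `(L² + 3L + 3)(1 - L) - (L + 3) = -L (L + 1)²`
    nlinarith [mul_lt_mul_of_pos_left key h3, mul_nonneg (neg_nonneg.2 hL.le) (sq_nonneg (L + 1))]

lemma exists_neg_log_add_two_mul_sub_two_eq_zero :
    ∃ q ∈ Ioo (0 : ℝ) 1, -log q + 2 * q - 2 = 0 := by
  have hexp : exp (-2) < 1 / 2 := by
    have := add_one_lt_exp (two_ne_zero (α := ℝ))
    rw [exp_neg, one_div]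
    exact inv_strictAnti₀ two_pos (by linarith)
  have hcont : ContinuousOn (fun q => -log q + 2 * q - 2) (Icc (exp (-2)) (1 / 2)) :=
    ((continuousOn_log.mono fun q hq => (exp_pos _).trans_le hq.1 |>.ne').neg.add
      (continuousOn_const.mul continuousOn_id)).sub continuousOn_const
  have hsign : (0 : ℝ) ∈
      Ioo (-log (1 / 2) + 2 * (1 / 2) - 2) (-log (exp (-2)) + 2 * exp (-2) - 2) := by
    rw [log_exp, one_div, log_inv]
    constructor <;> linarith [log_two_lt_d9, exp_pos (-2)]
  obtain ⟨q, hq, hroot⟩ := intermediate_value_Ioo' hexp.le hcont hsign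
  exact ⟨q, ⟨(exp_pos _).trans hq.1, by linarith [hq.2]⟩, hroot⟩

noncomputable def varianceFactor (q : ℝ) : ℝ := (1 - q) / (q * log q ^ 2)

lemma hasDerivAt_varianceFactor {q : ℝ} (hq : 0 < q) (hq1 : q ≠ 1) :
    HasDerivAt varianceFactor ((2 * q - 2 - log q) / (q ^ 2 * log q ^ 3)) q := by
  have hL : log q ≠ 0 := log_ne_zero_of_pos_of_ne_one hq hq1
  have hlog : HasDerivAt log q⁻¹ q := hasDerivAt_log hq.ne'
  have := ((hasDerivAt_id' q).const_sub 1).fun_div ((hasDerivAt_id' q).fun_mul (hlog.fun_pow 2))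
    (mul_ne_zero hq.ne' (pow_ne_zero 2 hL))
  exact this.congr_deriv (by field_simp; ring)

lemma hasDerivAt_deriv_varianceFactor {q : ℝ} (hq : 0 < q) (hq1 : q ≠ 1) :
    HasDerivAt (fun q => (2 * q - 2 - log q) / (q ^ 2 * log q ^ 3))
      (2 * (log q ^ 2 + 3 * log q + 3 - q * (log q + 3)) / (q ^ 3 * log q ^ 4)) q := by
  have hL : log q ≠ 0 := log_ne_zero_of_pos_of_ne_one hq hq1
  have hlog : HasDerivAt log q⁻¹ q := hasDerivAt_log hq.ne'
  have := ((((hasDerivAt_id' q).const_mul 2).sub_const 2).fun_sub hlog).fun_div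
    ((hasDerivAt_pow 2 q).fun_mul (hlog.fun_pow 3))
    (mul_ne_zero (pow_ne_zero 2 hq.ne') (pow_ne_zero 3 hL))
  exact this.congr_deriv (by field_simp; ring)

lemma strictConvexOn_varianceFactor : StrictConvexOn ℝ (Ioo 0 1) varianceFactor := by
  have hderiv {x : ℝ} (hx : x ∈ Ioo (0 : ℝ) 1) := hasDerivAt_varianceFactor hx.1 hx.2.ne
  refine strictConvexOn_of_deriv2_pos' (convex_Ioo 0 1)
    (fun x hx => (hderiv hx).continuousAt.continuousWithinAt) fun x hx => ?_
  have hderiv_eq : deriv varianceFactor =ᶠ[𝓝 x]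
      fun q => (2 * q - 2 - log q) / (q ^ 2 * log q ^ 3) := by
    filter_upwards [isOpen_Ioo.mem_nhds hx] with y hy using (hderiv hy).deriv
  rw [Function.iterate_succ_apply', Function.iterate_one, hderiv_eq.deriv_eq,
    (hasDerivAt_deriv_varianceFactor hx.1 hx.2.ne).deriv]
  have hL : log x < 0 := log_neg hx.1 hx.2
  have hnum := exp_mul_add_three_lt hL
  rw [exp_log hx.1] at hnum
  exact div_pos (by linarith) (mul_pos (pow_pos hx.1 3) (even_two_mul 2 |>.pow_pos hL.ne))

/-- `h q = (1-q)/(q log² q)` is convex on `(0,1)`, and its unique minimizer `q*` on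
`(0,1)` satisfies `-log q* + 2 q* - 2 = 0`. -/
theorem alpha_zero_variance_factor_convex :
    let h : ℝ → ℝ := fun q => (1 - q) / (q * (Real.log q) ^ 2)
    ConvexOn ℝ (Set.Ioo (0 : ℝ) 1) h ∧
      ∃ q ∈ Set.Ioo (0 : ℝ) 1,
        (∀ x ∈ Set.Ioo (0 : ℝ) 1, h q ≤ h x) ∧
        (∀ q' ∈ Set.Ioo (0 : ℝ) 1, (∀ x ∈ Set.Ioo (0 : ℝ) 1, h q' ≤ h x) → q' = q) ∧
        -Real.log q + 2 * q - 2 = 0 := by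
  intro h
  have hconv : StrictConvexOn ℝ (Ioo 0 1) h := strictConvexOn_varianceFactor
  obtain ⟨q, hq, hroot⟩ := exists_neg_log_add_two_mul_sub_two_eq_zero
  have hcrit : HasDerivAt h 0 q := (hasDerivAt_varianceFactor hq.1 hq.2.ne).congr_deriv <| by
    rw [show 2 * q - 2 - log q = 0 by linarith, zero_div]
  have hmin : IsMinOn h (Ioo 0 1) q := isMinOn_iff.2 fun x hx => by
    rcases eq_or_ne x q with rfl | hxq
    · exact le_rfl
    · exact (hconv.lt_of_hasDerivAt_eq_zero hq hx hxq hcrit).le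
  exact ⟨hconv.convexOn, q, hq, hmin, fun q' hq' hq'min => hconv.eq_of_isMinOn hq'min hmin hq' hq,
    hroot⟩
end

section
/- Fix q ∈ (0,1), α ∈ (0,2], and let F be the CDF of |S(α,1)| with density f, W = F^{-1}(q), and assume f(W) > 0 and F differentiable at W. Define for ε ∈ (0,1): G_R(ε) = ε² / [ -(1-q)log((1-F((1+ε)^{1/α}W))/(1-q)) ... ], i.e., 1/G_R(ε) = [ -(1-q)log(1-F((1+ε)^{1/α}W)) - q log F((1+ε)^{1/α}W) + (1-q)log(1-q) + q log q ] / ε². Then lim_{ε→0+} G_R(ε) = 2q(1-q)α² / (f(W)² W²). -/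
/-!
With `p(ε) = F((1 + ε)^(1/α) W)`, the denominator is the Bernoulli divergence `D(q ‖ p(ε))`.
It vanishes to second order at `p = q`, with `D(q ‖ p) ~ (p - q)² / (2 q (1 - q))` (L'Hôpital),
while `p(ε) - q ~ f(W) W ε / α` by the chain rule. Hence the denominator is
`~ f(W)² W² ε² / (2 q (1 - q) α²)`.
-/

open Real Filter Set Topology

noncomputable def bernoulliKL (q p : ℝ) : ℝ :=
  -(1 - q) * log (1 - p) - q * log p + (1 - q) * log (1 - q) + q * log q

lemma bernoulliKL_self (q : ℝ) : bernoulliKL q q = 0 := by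
  unfold bernoulliKL
  ring

lemma hasDerivAt_bernoulliKL (q : ℝ) {p : ℝ} (hp₀ : p ≠ 0) (hp₁ : p ≠ 1) :
    HasDerivAt (bernoulliKL q) ((p - q) / (p * (1 - p))) p := by
  have hp₁' : 1 - p ≠ 0 := sub_ne_zero.mpr hp₁.symm
  have h₁ : HasDerivAt (fun x => log (1 - x)) ((1 - p)⁻¹ * -1) p :=
    (hasDerivAt_log hp₁').comp p ((hasDerivAt_id p).const_sub 1)
  refine ((((h₁.const_mul (-(1 - q))).sub ((hasDerivAt_log hp₀).const_mul q)).add_const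
    ((1 - q) * log (1 - q))).add_const (q * log q)).congr_deriv ?_
  field_simp
  ring

lemma tendsto_bernoulliKL_div_sq {q : ℝ} (hq₀ : 0 < q) (hq₁ : q < 1) :
    Tendsto (fun p => bernoulliKL q p / (p - q) ^ 2) (𝓝[≠] q) (𝓝 (1 / (2 * q * (1 - q)))) := by
  have hnear : ∀ᶠ p in 𝓝[≠] q, p ∈ Ioo 0 1 ∧ p ≠ q := by
    filter_upwards [nhdsWithin_le_nhds (isOpen_Ioo.mem_nhds ⟨hq₀, hq₁⟩), self_mem_nhdsWithin]
      with p hp hpq using ⟨hp, hpq⟩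
  have hderiv : ∀ᶠ p in 𝓝[≠] q, HasDerivAt (bernoulliKL q) ((p - q) / (p * (1 - p))) p :=
    hnear.mono fun p hp => hasDerivAt_bernoulliKL q hp.1.1.ne' hp.1.2.ne
  have hKL : Tendsto (bernoulliKL q) (𝓝[≠] q) (𝓝 0) := by
    have := (hasDerivAt_bernoulliKL q hq₀.ne' hq₁.ne).continuousAt.tendsto
    rw [bernoulliKL_self] at this
    exact this.mono_left nhdsWithin_le_nhds
  have hsq : Tendsto (fun p : ℝ => (p - q) ^ 2) (𝓝[≠] q) (𝓝 0) := by
    have : Continuous fun p : ℝ => (p - q) ^ 2 := by fun_prop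
    simpa using this.continuousAt.tendsto.mono_left (nhdsWithin_le_nhds (a := q))
  have hratio : Tendsto (fun p => (p - q) / (p * (1 - p)) / (2 * (p - q))) (𝓝[≠] q)
      (𝓝 (1 / (2 * q * (1 - q)))) := by
    have hcont : ContinuousAt (fun p : ℝ => 1 / (2 * p * (1 - p))) q := by
      have : 2 * q * (1 - q) ≠ 0 := by nlinarith
      fun_prop (disch := exact this)
    refine (hcont.tendsto.mono_left nhdsWithin_le_nhds).congr' ?_
    filter_upwards [hnear] with p hp
    have : p - q ≠ 0 := sub_ne_zero.mpr hp.2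
    field_simp
  refine HasDerivAt.lhopital_zero_nhdsNE hderiv ?_ ?_ hKL hsq hratio
  · exact Eventually.of_forall fun p => by
      simpa using ((hasDerivAt_id p).sub_const q).fun_pow 2
  · filter_upwards [self_mem_nhdsWithin] with p hp
    exact mul_ne_zero two_ne_zero (sub_ne_zero.mpr hp)

lemma tendsto_comp_div_sq_of_hasDerivAt {φ g : ℝ → ℝ} {a c g' x : ℝ}
    (hφ : Tendsto (fun p => φ p / (p - a) ^ 2) (𝓝[≠] a) (𝓝 c))
    (hg : HasDerivAt g g' x) (hgx : g x = a) (hg' : g' ≠ 0) :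
    Tendsto (fun ε => φ (g ε) / (ε - x) ^ 2) (𝓝[≠] x) (𝓝 (c * g' ^ 2)) := by
  subst hgx
  have hg_ne := hg.tendsto_nhdsNE hg'
  refine ((hφ.comp hg_ne).mul (hg.tendsto_slope.pow 2)).congr' ?_
  filter_upwards [hg_ne self_mem_nhdsWithin, self_mem_nhdsWithin] with ε hgε hε
  have : g ε - g x ≠ 0 := sub_ne_zero.mpr hgε
  have : ε - x ≠ 0 := sub_ne_zero.mpr hε
  simp only [Function.comp_apply, slope_def_field]
  field_simp

lemma hasDerivAt_one_add_rpow_mul (r W : ℝ) :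
    HasDerivAt (fun ε : ℝ => (1 + ε) ^ r * W) (r * W) 0 := by
  simpa using (((hasDerivAt_id (0 : ℝ)).const_add 1).rpow_const (p := r) (by simp)).mul_const W

theorem tail_constant_limit_general (α q W : ℝ) (hα0 : 0 < α)
    (hq : q ∈ Set.Ioo (0 : ℝ) 1) (hW : 0 < W)
    (F f : ℝ → ℝ)
    (hf : ∀ x, HasDerivAt F (f x) x) (hFW : F W = q) (hfW : 0 < f W) :
    Tendsto
      (fun ε : ℝ => ε ^ 2 /
        (-(1 - q) * Real.log (1 - F ((1 + ε) ^ (1 / α) * W))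
          - q * Real.log (F ((1 + ε) ^ (1 / α) * W))
          + (1 - q) * Real.log (1 - q) + q * Real.log q))
      (nhdsWithin 0 (Set.Ioi 0))
      (nhds (2 * q * (1 - q) * α ^ 2 / ((f W) ^ 2 * W ^ 2))) := by
  obtain ⟨hq₀, hq₁⟩ := hq
  have hg : HasDerivAt (fun ε => F ((1 + ε) ^ (1 / α) * W)) (f W * (1 / α * W)) 0 := by
    simpa [Function.comp_def] using (hf _).comp 0 (hasDerivAt_one_add_rpow_mul (1 / α) W)
  have hKL := tendsto_comp_div_sq_of_hasDerivAt (tendsto_bernoulliKL_div_sq hq₀ hq₁) hg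
    (by simp [hFW]) (by positivity)
  have hq₁' : 0 < 1 - q := sub_pos.mpr hq₁
  have hc : 1 / (2 * q * (1 - q)) * (f W * (1 / α * W)) ^ 2 ≠ 0 := by positivity
  have hval : (1 / (2 * q * (1 - q)) * (f W * (1 / α * W)) ^ 2)⁻¹
      = 2 * q * (1 - q) * α ^ 2 / (f W ^ 2 * W ^ 2) := by
    field_simp
  rw [← hval]
  refine ((hKL.mono_left (nhdsWithin_mono _ fun ε hε => ne_of_gt hε)).inv₀ hc).congr fun ε => ?_
  simp [bernoulliKL]

/-- Limit of the right tail-bound constant `G_{R,q}` as `ε → 0+`: with `F` a twice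
differentiable strictly increasing CDF with density `f = F'`, `W > 0`, `F W = q ∈ (0,1)`,
and `f W > 0`,
`lim_{ε→0+} ε² / D(ε) = 2 q (1-q) α² / (f(W)² W²)` where
`D(ε) = -(1-q) log (1 - F((1+ε)^{1/α} W)) - q log F((1+ε)^{1/α} W)
        + (1-q) log (1-q) + q log q`. -/
theorem tail_constant_limit (α q W : ℝ) (hα0 : 0 < α) (hα2 : α ≤ 2)
    (hq : q ∈ Set.Ioo (0 : ℝ) 1) (hW : 0 < W)
    (F f : ℝ → ℝ) (hFsmooth : ContDiff ℝ 2 F) (hFm : StrictMono F)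
    (hf : ∀ x, HasDerivAt F (f x) x) (hFW : F W = q) (hfW : 0 < f W) :
    Tendsto
      (fun ε : ℝ => ε ^ 2 /
        (-(1 - q) * Real.log (1 - F ((1 + ε) ^ (1 / α) * W))
          - q * Real.log (F ((1 + ε) ^ (1 / α) * W))
          + (1 - q) * Real.log (1 - q) + q * Real.log q))
      (nhdsWithin 0 (Set.Ioi 0))
      (nhds (2 * q * (1 - q) * α ^ 2 / ((f W) ^ 2 * W ^ 2))) :=
  tail_constant_limit_general α q W hα0 hq hW F f hf hFW hfW
end

section
/- Let F be a continuous strictly increasing CDF with positive density f at W = F^{-1}((q+1)/2). For the estimator d̂ = (empirical q-quantile of {|x_j|}/W)^α based on k i.i.d. samples x_j with law symmetric and scale 1 (true value d = 1), and for ε ∈ (0,1): P(d̂ ≤ 1 - ε) ≤ exp(-k·D(q ‖ 2F((1-ε)^{1/α}W) - 1)), where D is binary KL divergence, provided 2F((1-ε)^{1/α}W) - 1 < q. -/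
/-!
Put `c = (1-ε)^{1/α} W`. If `d̂ ≤ 1 - ε` then the empirical `q`-quantile of the `|x_j|` is at
most `c`, so at least `q k` of the `|x_j|` are at most `c`. The indicators of the events
`|x_j| ≤ c` are independent Bernoulli variables with parameter `p = F c - F (-c) = 2 F c - 1`,
and the Chernoff bound for their sum, at the optimal exponent, is `exp (-k D(q ‖ p))`.
-/

open Real MeasureTheory ProbabilityTheory Finset Filter Topology

noncomputable section

/-- The empirical `q`-quantile of samples `a : Fin k → ℝ` is `empiricalQuantile (q * k) a`. -/
def empiricalQuantile {ι : Type*} [Fintype ι] (r : ℝ) (a : ι → ℝ) : ℝ :=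
  sInf {s | r ≤ (#{j | a j ≤ s} : ℝ)}

def binaryKL (q p : ℝ) : ℝ :=
  q * log (q / p) + (1 - q) * log ((1 - q) / (1 - p))

end

lemma le_card_filter_of_empiricalQuantile_le {ι : Type*} [Fintype ι] {r c : ℝ} {a : ι → ℝ}
    (hr : r ≤ Fintype.card ι) (h : empiricalQuantile r a ≤ c) : r ≤ #{j | a j ≤ c} := by
  by_contra! hc
  set S := {s : ℝ | r ≤ (#{j | a j ≤ s} : ℝ)}
  have above : ∀ s ∈ S, ∃ j, c < a j ∧ a j ≤ s := by
    intro s hs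
    by_contra! hno
    have hsub : univ.filter (a · ≤ s) ⊆ univ.filter (a · ≤ c) := by
      intro j
      simp only [mem_filter, mem_univ, true_and]
      exact fun hj => not_lt.1 fun hcj => (hno j hcj).not_ge hj
    have : (#{j | a j ≤ s} : ℝ) ≤ #{j | a j ≤ c} := by exact_mod_cast card_le_card hsub
    exact (hs.trans this).not_gt hc
  obtain ⟨M, hM⟩ := (Set.finite_range a).bddAbove
  have hS : S.Nonempty := ⟨M, by
    simpa [S, filter_true_of_mem fun j _ => hM (Set.mem_range_self j)] using hr⟩
  obtain ⟨j₀, hj₀, -⟩ := above _ hS.some_mem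
  have hT : (univ.filter (c < a ·)).Nonempty := ⟨j₀, by simpa using hj₀⟩
  have hcT : c < (univ.filter (c < a ·)).inf' hT a :=
    (lt_inf'_iff _).2 fun j hj => (mem_filter.1 hj).2
  have hTS : (univ.filter (c < a ·)).inf' hT a ≤ sInf S := le_csInf hS fun s hs => by
    obtain ⟨j, hcj, hjs⟩ := above s hs
    exact (inf'_le a (by simpa using hcj)).trans hjs
  exact (hcT.trans_le (hTS.trans h)).false

lemma le_rpow_one_div_mul_of_div_rpow_le {y W α b : ℝ} (hW : 0 < W) (hα : 0 < α) (hb : 0 ≤ b)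
    (h : (y / W) ^ α ≤ b) : y ≤ b ^ (1 / α) * W := by
  rcases lt_or_ge y 0 with hy | hy
  · exact hy.le.trans (mul_nonneg (rpow_nonneg hb _) hW.le)
  · rw [← div_le_iff₀ hW, one_div]
    exact (le_rpow_inv_iff_of_pos (div_nonneg hy hW.le) hb hα).2 h

section CDF

variable {Ω : Type*} [MeasurableSpace Ω] {μ : Measure Ω} {x : Ω → ℝ} {F : ℝ → ℝ}

lemma measure_lt_eq_ofReal_of_continuous (hFc : Continuous F)
    (hcdf : ∀ t, μ {ω | x ω ≤ t} = ENNReal.ofReal (F t)) (t : ℝ) :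
    μ {ω | x ω < t} = ENNReal.ofReal (F t) := by
  set u : ℕ → ℝ := fun n => t - 1 / (n + 1)
  have hu : Tendsto u atTop (𝓝 t) := by
    simpa [u] using tendsto_one_div_add_atTop_nhds_zero_nat.const_sub t
  have hu_mono : Monotone u := fun m n hmn => by
    simp only [u]
    gcongr
  have hunion : {ω | x ω < t} = ⋃ n, x ⁻¹' Set.Iic (u n) := by
    have hlt : ∀ n, u n < t := fun n => sub_lt_self t Nat.one_div_pos_of_nat
    rw [← Set.preimage_iUnion, iUnion_Iic_eq_Iio_of_lt_of_tendsto hlt hu]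
    rfl
  rw [hunion]
  refine tendsto_nhds_unique (tendsto_measure_iUnion_atTop fun m n hmn =>
    Set.preimage_mono (Set.Iic_subset_Iic.2 (hu_mono hmn))) ?_
  simp only [Function.comp_def, Set.preimage, Set.mem_Iic, hcdf]
  exact ((ENNReal.continuous_ofReal.comp hFc).tendsto t).comp hu

lemma measure_abs_le_eq_ofReal_sub [IsFiniteMeasure μ] (hx : Measurable x) (hFc : Continuous F)
    (hcdf : ∀ t, μ {ω | x ω ≤ t} = ENNReal.ofReal (F t)) {c : ℝ} (hc : 0 ≤ c)
    (hF : 0 ≤ F (-c)) : μ {ω | |x ω| ≤ c} = ENNReal.ofReal (F c - F (-c)) := by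
  have hdiff : {ω | |x ω| ≤ c} = {ω | x ω ≤ c} \ {ω | x ω < -c} := by
    ext ω
    simp [abs_le, and_comm]
  have hsub : {ω | x ω < -c} ⊆ {ω | x ω ≤ c} := fun ω (h : x ω < -c) =>
    show x ω ≤ c by linarith
  rw [hdiff, measure_sdiff hsub
    (measurableSet_lt hx measurable_const).nullMeasurableSet (measure_ne_top _ _), hcdf,
    measure_lt_eq_ofReal_of_continuous hFc hcdf, ENNReal.ofReal_sub _ hF]

end CDF

lemma exp_mul_indicator_one {Ω : Type*} (A : Set Ω) (t : ℝ) :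
    (fun ω => exp (t * A.indicator 1 ω)) = fun ω => A.indicator (fun _ => exp t - 1) ω + 1 := by
  ext ω
  by_cases h : ω ∈ A <;> simp [h]

section Chernoff

variable {Ω : Type*} [MeasurableSpace Ω] {μ : Measure Ω}

lemma integrable_exp_mul_indicator_one [IsFiniteMeasure μ] {A : Set Ω} (hA : MeasurableSet A)
    (t : ℝ) : Integrable (fun ω => exp (t * A.indicator 1 ω)) μ := by
  rw [exp_mul_indicator_one]
  exact ((integrable_const _).indicator hA).add (integrable_const 1)

lemma mgf_indicator_one [IsProbabilityMeasure μ] {A : Set Ω} (hA : MeasurableSet A) (t : ℝ) :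
    mgf (A.indicator 1) μ t = μ.real A * exp t + (1 - μ.real A) := by
  rw [mgf, exp_mul_indicator_one, integral_add ((integrable_const _).indicator hA)
    (integrable_const 1), integral_indicator_const _ hA, integral_const]
  simp only [probReal_univ, smul_eq_mul]
  ring

/-- `exp t = q (1 - p) / ((1 - q) p)` is where `t ↦ exp (-t q) (p eᵗ + 1 - p)` is minimal. -/
lemma exp_neg_mul_mul_bernoulli_mgf {p q t : ℝ} (hp0 : 0 < p) (hp1 : p < 1) (hq0 : 0 < q)
    (hq1 : q < 1) (ht : exp t = q * (1 - p) / ((1 - q) * p)) :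
    exp (-t * q) * (p * exp t + (1 - p)) = exp (-binaryKL q p) := by
  have hmgf : p * exp t + (1 - p) = (1 - p) / (1 - q) := by
    have : 1 - q ≠ 0 := by linarith
    rw [ht]
    field_simp
    ring
  have hlog : t = log q + log (1 - p) - log (1 - q) - log p := by
    rw [← log_exp t, ht, log_div (by positivity) (by positivity), log_mul (by positivity)
      (by linarith), log_mul (by linarith) (by positivity)]
    ring
  rw [hmgf, ← exp_log (show 0 < (1 - p) / (1 - q) by bound), ← exp_add, binaryKL, hlog,
    log_div (by linarith) (by linarith), log_div hq0.ne' hp0.ne',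
    log_div (by linarith) (by linarith)]
  ring_nf

theorem measure_le_sum_indicator_le_exp_binaryKL {ι : Type*} [Fintype ι] {A : ι → Set Ω}
    (hA : ∀ j, MeasurableSet (A j))
    (hindep : iIndepFun (fun j => (A j).indicator (1 : Ω → ℝ)) μ) {p q : ℝ}
    (hp : ∀ j, μ (A j) = ENNReal.ofReal p) (hp0 : 0 < p) (hpq : p ≤ q) (hq1 : q < 1) :
    μ {ω | q * Fintype.card ι ≤ ∑ j, (A j).indicator 1 ω}
      ≤ ENNReal.ofReal (exp (-(Fintype.card ι * binaryKL q p))) := by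
  have := hindep.isProbabilityMeasure
  have hpreal : ∀ j, μ.real (A j) = p := fun j => by
    rw [measureReal_def, hp, ENNReal.toReal_ofReal hp0.le]
  have hq0 : 0 < q := hp0.trans_le hpq
  have hratio : 0 < q * (1 - p) / ((1 - q) * p) := by
    apply div_pos <;> apply mul_pos <;> linarith
  set t := log (q * (1 - p) / ((1 - q) * p))
  have ht : exp t = q * (1 - p) / ((1 - q) * p) := exp_log hratio
  have ht0 : 0 ≤ t := log_nonneg <| by rw [le_div_iff₀ (by nlinarith)]; nlinarith
  have hmeas : ∀ j, Measurable ((A j).indicator (1 : Ω → ℝ)) :=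
    fun j => measurable_const.indicator (hA j)
  have hint := hindep.integrable_exp_mul_sum hmeas (s := univ) (t := t)
    fun j _ => integrable_exp_mul_indicator_one (hA j) t
  have hchernoff := measure_ge_le_exp_mul_mgf (q * Fintype.card ι) ht0 hint
  rw [hindep.mgf_sum hmeas,
    prod_congr rfl fun j _ => by rw [mgf_indicator_one (hA j), hpreal j], prod_const,
    card_univ] at hchernoff
  simp only [Finset.sum_apply] at hchernoff
  rw [← ofReal_measureReal]
  refine ENNReal.ofReal_le_ofReal (hchernoff.trans_eq ?_)
  rw [show exp (-t * (q * Fintype.card ι)) = exp (-t * q) ^ Fintype.card ι by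
      rw [← exp_nat_mul]; ring_nf,
    ← mul_pow, exp_neg_mul_mul_bernoulli_mgf hp0 (hpq.trans_lt hq1) hq0 hq1 ht, ← exp_nat_mul]
  ring_nf

end Chernoff

theorem quantile_estimator_left_tail_general
    {Ω : Type*} [MeasurableSpace Ω] (μ : Measure Ω) [IsProbabilityMeasure μ]
    (k : ℕ) (x : Fin k → Ω → ℝ) (hXm : ∀ j, Measurable (x j))
    (hindep : iIndepFun x μ)
    (F : ℝ → ℝ) (hFc : Continuous F) (hFm : StrictMono F)
    (hsym : ∀ t : ℝ, F (-t) = 1 - F t)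
    (hcdf : ∀ j, ∀ t : ℝ, μ {ω | x j ω ≤ t} = ENNReal.ofReal (F t))
    (α q W ε : ℝ) (hα : 0 < α) (hq : q ∈ Set.Ioo (0 : ℝ) 1) (hW : 0 < W)
    (hε : ε ∈ Set.Ioo (0 : ℝ) 1)
    (p : ℝ) (hp : p = 2 * F ((1 - ε) ^ (1 / α) * W) - 1) (hpq : p < q) :
    μ {ω | (sInf {s : ℝ |
          q * k ≤ ((Finset.univ.filter fun j => |x j ω| ≤ s).card : ℝ)} / W) ^ α
        ≤ 1 - ε}
      ≤ ENNReal.ofReal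
        (Real.exp (-(k * (q * Real.log (q / p)
          + (1 - q) * Real.log ((1 - q) / (1 - p)))))) := by
  set c := (1 - ε) ^ (1 / α) * W
  have h1ε : 0 < 1 - ε := by linarith [hε.2]
  have hc : 0 < c := mul_pos (rpow_pos_of_pos h1ε _) hW
  have hF0 := hsym 0
  rw [neg_zero] at hF0
  have hp0 : 0 < p := by linarith [hFm hc]
  set A : Fin k → Set Ω := fun j => {ω | |x j ω| ≤ c}
  have hA : ∀ j, μ (A j) = ENNReal.ofReal p := fun j => by
    rw [measure_abs_le_eq_ofReal_sub (hXm j) hFc (hcdf j) hc.le (by linarith [hsym c, hq.2]),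
      hsym, hp]
    ring_nf
  have hAindep : iIndepFun (fun j => (A j).indicator (1 : Ω → ℝ)) μ :=
    hindep.comp _ fun _ =>
      measurable_const.indicator (measurableSet_le measurable_abs measurable_const)
  have hevent : ∀ ω, (empiricalQuantile (q * k) (fun j => |x j ω|) / W) ^ α ≤ 1 - ε →
      q * Fintype.card (Fin k) ≤ ∑ j, (A j).indicator 1 ω := fun ω hω => by
    have hk : q * k ≤ Fintype.card (Fin k) := by
      rw [Fintype.card_fin]
      exact mul_le_of_le_one_left k.cast_nonneg hq.2.le
    have := le_card_filter_of_empiricalQuantile_le hk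
      (le_rpow_one_div_mul_of_div_rpow_le hW hα h1ε.le hω)
    rw [natCast_card_filter] at this
    simpa only [Fintype.card_fin, A, Set.indicator_apply, Set.mem_ofPred_eq, Pi.one_apply]
      using this
  calc _ ≤ μ {ω | q * Fintype.card (Fin k) ≤ ∑ j, (A j).indicator 1 ω} :=
        measure_mono hevent
    _ ≤ _ := by
      refine (measure_le_sum_indicator_le_exp_binaryKL (fun j => measurableSet_le (hXm j).abs
        measurable_const) hAindep hA hp0 hpq.le hq.2).trans_eq ?_
      rw [Fintype.card_fin, binaryKL]

/-- Left tail bound for the quantile estimator at true scale `d = 1`: with `F` a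
continuous strictly increasing CDF with positive density at `W = F⁻¹((q+1)/2)`, for
`ε ∈ (0,1)` and `p = 2 F((1-ε)^{1/α} W) - 1 < q`,
`P(d̂ ≤ 1-ε) ≤ exp (-k D(q‖p))` where `d̂ = (empirical q-quantile of |x_j| / W)^α`. -/
theorem quantile_estimator_left_tail
    {Ω : Type*} [MeasurableSpace Ω] (μ : Measure Ω) [IsProbabilityMeasure μ]
    (k : ℕ) (hk : 0 < k) (x : Fin k → Ω → ℝ) (hXm : ∀ j, Measurable (x j))
    (hindep : iIndepFun x μ)
    (F : ℝ → ℝ) (hFc : Continuous F) (hFm : StrictMono F)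
    (hsym : ∀ t : ℝ, F (-t) = 1 - F t)
    (hcdf : ∀ j, ∀ t : ℝ, μ {ω | x j ω ≤ t} = ENNReal.ofReal (F t))
    (α q W ε fW : ℝ) (hα : 0 < α) (hq : q ∈ Set.Ioo (0 : ℝ) 1) (hW : 0 < W)
    (hFW : F W = (q + 1) / 2)
    (hderiv : HasDerivAt F fW W) (hfW : 0 < fW)
    (hε : ε ∈ Set.Ioo (0 : ℝ) 1)
    (p : ℝ) (hp : p = 2 * F ((1 - ε) ^ (1 / α) * W) - 1) (hpq : p < q) :
    μ {ω | (sInf {s : ℝ |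
          q * k ≤ ((Finset.univ.filter fun j => |x j ω| ≤ s).card : ℝ)} / W) ^ α
        ≤ 1 - ε}
      ≤ ENNReal.ofReal
        (Real.exp (-(k * (q * Real.log (q / p)
          + (1 - q) * Real.log ((1 - q) / (1 - p)))))) :=
  quantile_estimator_left_tail_general μ k x hXm hindep F hFc hFm hsym hcdf α q W ε hα hq hW hε p hp
    hpq
end
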